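/- Let A = [[A_ff, A_fc],[A_cf, A_cc]] be an invertible matrix on F ⊕ C with A_ff invertible, let P = [[W],[I]] and R = [Z, I], and set δ_P = A_ff·W + A_fc, δ_R = Z·A_ff + A_cf, K = R·A·P. Suppose P satisfies the weak approximation property with respect to AᵀA with constant C_P, set C_W = sqrt(C_P·(1 + ‖W‖²)/‖AᵀA‖), and assume C_W·‖δ_R‖ < 1. Then K is invertible, and ‖A_ff⁻¹·δ_P·K⁻¹‖ ≤ C_W/(1 − C_W·‖δ_R‖) and ‖δ_P·K⁻¹‖ ≤ C_W·‖A_ff‖/(1 − C_W·‖δ_R‖). -/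

import Mathlib

/-!
Write `S = A_cc - A_cf A_ff⁻¹ A_fc` for the Schur complement and `E = A_ff⁻¹ δ_P`, so that
`K = S + δ_R E`. The vector `v = (-A_ff⁻¹ A_fc x, x)` satisfies `A v = (0, S x)`, and the map
`v ↦ W v_C - v_F`, which has norm at most `√(1 + ‖W‖²)`, kills the range of `P` and sends `v` to
`E x`. Applying the WAP to `v` thus gives `‖E x‖ ≤ C_W ‖S x‖`, hence
`‖K x‖ ≥ (1 - C_W ‖δ_R‖) ‖S x‖`. As `S` is invertible with `A`, so is `K`, and
`‖E K⁻¹ y‖ ≤ C_W ‖S K⁻¹ y‖ ≤ C_W ‖y‖ / (1 - C_W ‖δ_R‖)`; finally `δ_P K⁻¹ = A_ff E K⁻¹`.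
-/

open Matrix
open scoped Matrix.Norms.L2Operator

noncomputable def euclNorm {ι : Type*} [Fintype ι] (v : ι → ℝ) : ℝ :=
  ‖(WithLp.equiv 2 (ι → ℝ)).symm v‖

section EuclNorm

variable {ι κ : Type*} [Fintype ι] [Fintype κ]

lemma euclNorm_nonneg (v : ι → ℝ) : 0 ≤ euclNorm v := norm_nonneg _

lemma euclNorm_sub_le (u v : ι → ℝ) : euclNorm (u - v) ≤ euclNorm u + euclNorm v :=
  norm_sub_le (WithLp.toLp 2 u) (WithLp.toLp 2 v)

lemma euclNorm_eq_zero {v : ι → ℝ} : euclNorm v = 0 ↔ v = 0 := by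
  simp [euclNorm]

lemma euclNorm_sq_eq_inl_add_inr (w : ι ⊕ κ → ℝ) :
    euclNorm w ^ 2 = euclNorm (w ∘ Sum.inl) ^ 2 + euclNorm (w ∘ Sum.inr) ^ 2 := by
  simp [euclNorm, EuclideanSpace.norm_sq_eq, Fintype.sum_sum_type]

variable [DecidableEq ι]

lemma euclNorm_mulVec_le (M : Matrix κ ι ℝ) (x : ι → ℝ) :
    euclNorm (M *ᵥ x) ≤ ‖M‖ * euclNorm x :=
  M.l2_opNorm_mulVec (WithLp.toLp 2 x)

lemma l2_opNorm_le_of_euclNorm_mulVec_le (M : Matrix κ ι ℝ) {c : ℝ} (hc : 0 ≤ c)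
    (h : ∀ x, euclNorm (M *ᵥ x) ≤ c * euclNorm x) : ‖M‖ ≤ c := by
  rw [l2_opNorm_def]
  exact ContinuousLinearMap.opNorm_le_bound _ hc fun x => h x.ofLp

end EuclNorm

section Perturbation

variable {m n : Type*} [Fintype m] [Fintype n] [DecidableEq m]
  {S : Matrix n n ℝ} {D : Matrix n m ℝ} {E : Matrix m n ℝ} {c : ℝ}

lemma mul_euclNorm_le_euclNorm_add_mul_mulVec
    (hE : ∀ x, euclNorm (E *ᵥ x) ≤ c * euclNorm (S *ᵥ x)) (x : n → ℝ) :
    (1 - c * ‖D‖) * euclNorm (S *ᵥ x) ≤ euclNorm ((S + D * E) *ᵥ x) := by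
  have hsplit : S *ᵥ x = (S + D * E) *ᵥ x - D *ᵥ (E *ᵥ x) := by
    rw [add_mulVec, ← mulVec_mulVec, add_sub_cancel_right]
  have hSx : euclNorm (S *ᵥ x) ≤ euclNorm ((S + D * E) *ᵥ x) + ‖D‖ * euclNorm (E *ᵥ x) :=
    calc euclNorm (S *ᵥ x) = euclNorm ((S + D * E) *ᵥ x - D *ᵥ (E *ᵥ x)) := congrArg euclNorm hsplit
      _ ≤ euclNorm ((S + D * E) *ᵥ x) + euclNorm (D *ᵥ (E *ᵥ x)) := euclNorm_sub_le _ _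
      _ ≤ euclNorm ((S + D * E) *ᵥ x) + ‖D‖ * euclNorm (E *ᵥ x) := by
        gcongr; exact euclNorm_mulVec_le _ _
  have hDE := mul_le_mul_of_nonneg_left (hE x) (norm_nonneg D)
  linarith

variable [DecidableEq n]

lemma isUnit_add_mul_of_euclNorm_mulVec_le (hS : IsUnit S)
    (hE : ∀ x, euclNorm (E *ᵥ x) ≤ c * euclNorm (S *ᵥ x)) (hsmall : c * ‖D‖ < 1) :
    IsUnit (S + D * E) := by
  rw [← mulVec_injective_iff_isUnit] at hS ⊢
  refine fun x y hxy => sub_eq_zero.mp (hS ?_)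
  have hKxy : euclNorm ((S + D * E) *ᵥ (x - y)) = 0 := by
    rw [mulVec_sub, hxy, sub_self, euclNorm_eq_zero]
  have hSxy : euclNorm (S *ᵥ (x - y)) = 0 := by
    have := mul_euclNorm_le_euclNorm_add_mul_mulVec (D := D) hE (x - y)
    rw [hKxy] at this
    exact le_antisymm (nonpos_of_mul_nonpos_right this (sub_pos.mpr hsmall)) (euclNorm_nonneg _)
  rwa [mulVec_zero, ← euclNorm_eq_zero]

lemma l2_opNorm_mul_inv_add_mul_le (hc : 0 ≤ c) (hK : IsUnit (S + D * E))
    (hE : ∀ x, euclNorm (E *ᵥ x) ≤ c * euclNorm (S *ᵥ x)) (hsmall : c * ‖D‖ < 1) :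
    ‖E * (S + D * E)⁻¹‖ ≤ c / (1 - c * ‖D‖) := by
  have hpos : 0 < 1 - c * ‖D‖ := sub_pos.mpr hsmall
  refine l2_opNorm_le_of_euclNorm_mulVec_le _ (div_nonneg hc hpos.le) fun y => ?_
  set x := (S + D * E)⁻¹ *ᵥ y
  have hKx : (S + D * E) *ᵥ x = y := by
    rw [mulVec_mulVec, mul_nonsing_inv _ ((isUnit_iff_isUnit_det _).mp hK), one_mulVec]
  have hSx : euclNorm (S *ᵥ x) ≤ euclNorm y / (1 - c * ‖D‖) := by
    rw [le_div_iff₀ hpos, mul_comm, ← hKx]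
    exact mul_euclNorm_le_euclNorm_add_mul_mulVec hE x
  calc euclNorm ((E * (S + D * E)⁻¹) *ᵥ y) = euclNorm (E *ᵥ x) := by rw [← mulVec_mulVec]
    _ ≤ c * euclNorm (S *ᵥ x) := hE x
    _ ≤ c * (euclNorm y / (1 - c * ‖D‖)) := by gcongr
    _ = c / (1 - c * ‖D‖) * euclNorm y := by ring

end Perturbation

section Interpolation

variable {F C : Type*} [Fintype C] [DecidableEq C]

lemma mulVec_inr_sub_inl_sub_fromRows_mulVec (W : Matrix F C ℝ) (v : F ⊕ C → ℝ) (wc : C → ℝ) :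
    W *ᵥ ((v - fromRows W 1 *ᵥ wc) ∘ Sum.inr) - (v - fromRows W 1 *ᵥ wc) ∘ Sum.inl
      = W *ᵥ (v ∘ Sum.inr) - v ∘ Sum.inl := by
  have hinr : (v - fromRows W 1 *ᵥ wc) ∘ Sum.inr = v ∘ Sum.inr - wc := by
    ext; simp [fromRows_mulVec]
  have hinl : (v - fromRows W 1 *ᵥ wc) ∘ Sum.inl = v ∘ Sum.inl - W *ᵥ wc := by
    ext; simp [fromRows_mulVec]
  rw [hinr, hinl, mulVec_sub]
  abel

variable [Fintype F]

lemma euclNorm_mulVec_inr_sub_inl_sq_le (W : Matrix F C ℝ) (w : F ⊕ C → ℝ) :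
    euclNorm (W *ᵥ (w ∘ Sum.inr) - w ∘ Sum.inl) ^ 2 ≤ (1 + ‖W‖ ^ 2) * euclNorm w ^ 2 := by
  have hle : euclNorm (W *ᵥ (w ∘ Sum.inr) - w ∘ Sum.inl)
      ≤ ‖W‖ * euclNorm (w ∘ Sum.inr) + euclNorm (w ∘ Sum.inl) :=
    (euclNorm_sub_le _ _).trans (by gcongr; exact euclNorm_mulVec_le _ _)
  rw [euclNorm_sq_eq_inl_add_inr]
  -- Cauchy–Schwarz in `ℝ²`: `(a b + 1 c)² ≤ (a² + 1)(b² + c²)`.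
  nlinarith [euclNorm_nonneg (W *ᵥ (w ∘ Sum.inr) - w ∘ Sum.inl),
    sq_nonneg (‖W‖ * euclNorm (w ∘ Sum.inl) - euclNorm (w ∘ Sum.inr))]

end Interpolation

section SchurComplement

variable {F C : Type*} [Fintype F] [Fintype C] [DecidableEq F]
  {Aff : Matrix F F ℝ} {Afc : Matrix F C ℝ} {Acf : Matrix C F ℝ} {Acc : Matrix C C ℝ}

lemma fromBlocks_mulVec_sumElim_neg_inv_mul_mulVec (hAff : IsUnit Aff) (x : C → ℝ) :
    fromBlocks Aff Afc Acf Acc *ᵥ Sum.elim (-(Aff⁻¹ * Afc) *ᵥ x) x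
      = Sum.elim (0 : F → ℝ) ((Acc - Acf * Aff⁻¹ * Afc) *ᵥ x) := by
  have hAffd := (isUnit_iff_isUnit_det Aff).mp hAff
  rw [fromBlocks_mulVec, Sum.elim_comp_inl, Sum.elim_comp_inr, mulVec_mulVec, mulVec_mulVec,
    Matrix.mul_neg, Matrix.mul_neg, mul_nonsing_inv_cancel_left _ _ hAffd]
  congr 1
  · rw [neg_mulVec, neg_add_cancel]
  · rw [neg_mulVec, sub_mulVec, Matrix.mul_assoc]
    abel

variable [DecidableEq C]

lemma fromCols_mul_fromBlocks_mul_fromRows (hAff : IsUnit Aff) (W : Matrix F C ℝ)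
    (Z : Matrix C F ℝ) :
    fromCols Z (1 : Matrix C C ℝ) * fromBlocks Aff Afc Acf Acc
        * (fromRows W 1 : Matrix (F ⊕ C) C ℝ)
      = (Acc - Acf * Aff⁻¹ * Afc) + (Z * Aff + Acf) * (Aff⁻¹ * (Aff * W + Afc)) := by
  have hAffd := (isUnit_iff_isUnit_det Aff).mp hAff
  rw [fromCols_mul_fromBlocks, fromCols_mul_fromRows, Matrix.mul_add,
    nonsing_inv_mul_cancel_left _ _ hAffd]
  simp only [Matrix.add_mul, Matrix.mul_add, Matrix.mul_assoc,
    mul_nonsing_inv_cancel_left _ _ hAffd, Matrix.one_mul, Matrix.mul_one]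
  abel

lemma euclNorm_mulVec_le_of_wap (hAff : IsUnit Aff) {W : Matrix F C ℝ} {q : ℝ}
    (hWAP : ∀ v, ∃ wc, euclNorm (v - fromRows W 1 *ᵥ wc) ^ 2
      ≤ q * euclNorm (fromBlocks Aff Afc Acf Acc *ᵥ v) ^ 2) (x : C → ℝ) :
    euclNorm ((Aff⁻¹ * (Aff * W + Afc)) *ᵥ x)
      ≤ √(q * (1 + ‖W‖ ^ 2)) * euclNorm ((Acc - Acf * Aff⁻¹ * Afc) *ᵥ x) := by
  have hAffd := (isUnit_iff_isUnit_det Aff).mp hAff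
  set v : F ⊕ C → ℝ := Sum.elim (-(Aff⁻¹ * Afc) *ᵥ x) x
  obtain ⟨wc, hwc⟩ := hWAP v
  have hv : (Aff⁻¹ * (Aff * W + Afc)) *ᵥ x = W *ᵥ (v ∘ Sum.inr) - v ∘ Sum.inl := by
    simp [v, Matrix.mul_add, nonsing_inv_mul_cancel_left _ _ hAffd, add_mulVec, neg_mulVec]
  have hAv : euclNorm (fromBlocks Aff Afc Acf Acc *ᵥ v) ^ 2
      = euclNorm ((Acc - Acf * Aff⁻¹ * Afc) *ᵥ x) ^ 2 := by
    rw [fromBlocks_mulVec_sumElim_neg_inv_mul_mulVec hAff, euclNorm_sq_eq_inl_add_inr]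
    simp [euclNorm_eq_zero]
  have hsq : euclNorm ((Aff⁻¹ * (Aff * W + Afc)) *ᵥ x) ^ 2
      ≤ q * (1 + ‖W‖ ^ 2) * euclNorm ((Acc - Acf * Aff⁻¹ * Afc) *ᵥ x) ^ 2 :=
    calc _ = euclNorm (W *ᵥ ((v - fromRows W 1 *ᵥ wc) ∘ Sum.inr)
              - (v - fromRows W 1 *ᵥ wc) ∘ Sum.inl) ^ 2 := by
          rw [hv, mulVec_inr_sub_inl_sub_fromRows_mulVec]
      _ ≤ (1 + ‖W‖ ^ 2) * euclNorm (v - fromRows W 1 *ᵥ wc) ^ 2 :=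
          euclNorm_mulVec_inr_sub_inl_sq_le _ _
      _ ≤ (1 + ‖W‖ ^ 2) * (q * euclNorm ((Acc - Acf * Aff⁻¹ * Afc) *ᵥ x) ^ 2) := by
          rw [← hAv]; gcongr
      _ = _ := by ring
  calc _ = √(euclNorm ((Aff⁻¹ * (Aff * W + Afc)) *ᵥ x) ^ 2) :=
        (Real.sqrt_sq (euclNorm_nonneg _)).symm
    _ ≤ √(q * (1 + ‖W‖ ^ 2) * euclNorm ((Acc - Acf * Aff⁻¹ * Afc) *ᵥ x) ^ 2) :=
        Real.sqrt_le_sqrt hsq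
    _ = _ := by rw [Real.sqrt_mul' _ (sq_nonneg _), Real.sqrt_sq (euclNorm_nonneg _)]

end SchurComplement

/-- **Lemma 3.2 (WAP on P).** If `P` satisfies the WAP with respect to `AᵀA` with constant
`C_P`, and `C_W·‖δ_R‖ < 1` with `C_W = sqrt(C_P(1 + ‖W‖²)/‖AᵀA‖)`, then `K` is invertible,
`‖A_ff⁻¹·δ_P·K⁻¹‖ ≤ C_W/(1 − C_W‖δ_R‖)` and `‖δ_P·K⁻¹‖ ≤ C_W‖A_ff‖/(1 − C_W‖δ_R‖)`. -/
theorem wap_on_P_coarse_bounds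
    {F C : Type*} [Fintype F] [Fintype C] [DecidableEq F] [DecidableEq C]
    (Aff : Matrix F F ℝ) (Afc : Matrix F C ℝ) (Acf : Matrix C F ℝ) (Acc : Matrix C C ℝ)
    (W : Matrix F C ℝ) (Z : Matrix C F ℝ)
    (A : Matrix (F ⊕ C) (F ⊕ C) ℝ) (hA : A = fromBlocks Aff Afc Acf Acc)
    (hAinv : IsUnit A) (hAff : IsUnit Aff)
    (P : Matrix (F ⊕ C) C ℝ) (hP : P = fromRows W 1)
    (R : Matrix C (F ⊕ C) ℝ) (hR : R = fromCols Z 1)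
    (K : Matrix C C ℝ) (hK : K = R * A * P)
    (δP : Matrix F C ℝ) (hδP : δP = Aff * W + Afc)
    (δR : Matrix C F ℝ) (hδR : δR = Z * Aff + Acf)
    (CP : ℝ)
    (hWAP : ∀ v : (F ⊕ C) → ℝ, ∃ wc : C → ℝ,
      euclNorm (v - P *ᵥ wc) ^ 2 ≤ (CP / ‖Aᵀ * A‖) * euclNorm (A *ᵥ v) ^ 2)
    (CW : ℝ) (hCW : CW = Real.sqrt (CP * (1 + ‖W‖ ^ 2) / ‖Aᵀ * A‖))
    (hsmall : CW * ‖δR‖ < 1) :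
    IsUnit K ∧
      ‖Aff⁻¹ * δP * K⁻¹‖ ≤ CW / (1 - CW * ‖δR‖) ∧
      ‖δP * K⁻¹‖ ≤ CW * ‖Aff‖ / (1 - CW * ‖δR‖) := by
  have hbound : ∀ x, euclNorm ((Aff⁻¹ * δP) *ᵥ x)
      ≤ CW * euclNorm ((Acc - Acf * Aff⁻¹ * Afc) *ᵥ x) := by
    rw [hCW, mul_div_right_comm, hδP]
    subst hA hP
    exact euclNorm_mulVec_le_of_wap hAff hWAP
  have hSchur : IsUnit (Acc - Acf * Aff⁻¹ * Afc) := by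
    have := hAff.invertible
    rwa [hA, isUnit_fromBlocks_iff_of_invertible₁₁, invOf_eq_nonsing_inv] at hAinv
  have hKeq : K = (Acc - Acf * Aff⁻¹ * Afc) + δR * (Aff⁻¹ * δP) := by
    rw [hK, hR, hA, hP, fromCols_mul_fromBlocks_mul_fromRows hAff, hδP, hδR]
  have hKunit : IsUnit K := hKeq ▸ isUnit_add_mul_of_euclNorm_mulVec_le hSchur hbound hsmall
  have hEK : ‖Aff⁻¹ * δP * K⁻¹‖ ≤ CW / (1 - CW * ‖δR‖) := by
    rw [hKeq] at hKunit ⊢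
    exact l2_opNorm_mul_inv_add_mul_le (hCW ▸ Real.sqrt_nonneg _) hKunit hbound hsmall
  refine ⟨hKunit, hEK, ?_⟩
  have hAffd := (isUnit_iff_isUnit_det Aff).mp hAff
  calc ‖δP * K⁻¹‖ = ‖Aff * (Aff⁻¹ * δP * K⁻¹)‖ := by
        rw [← Matrix.mul_assoc, ← Matrix.mul_assoc, mul_nonsing_inv _ hAffd, Matrix.one_mul]
    _ ≤ ‖Aff‖ * (CW / (1 - CW * ‖δR‖)) := (l2_opNorm_mul _ _).trans (by gcongr)
    _ = CW * ‖Aff‖ / (1 - CW * ‖δR‖) := by ring
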